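/- A degree d reduced codimension one foliation F_φ on P³ has tangent sheaf isomorphic to O(1) ⊕ O(1−d) if and only if it is the linear pull-back of a degree d reduced foliation on P². -/

import Mathlib

open MvPolynomial

/-! Codimension one holomorphic foliations on `ℙ³`, in algebraic form.
A degree `d` codimension one foliation is given by a projective `1`-form
`ω = ∑ Fᵢ dzᵢ` where the `Fᵢ ∈ ℂ[z₀,…,z₃]` are homogeneous of degree `d+1`,
satisfy the Euler relation `∑ zᵢFᵢ = 0`, the integrability condition
`ω ∧ dω = 0`, and the common zero scheme (the singular scheme `Z`) has
codimension at least two.  The tangent sheaf `𝓕` of the foliation is the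
kernel of `Tℙ³ → 𝓘_Z(d+2)`; combining this with the Euler sequence,
`𝓕 ⊕ 𝓞` is the sheaf associated with the graded module of syzygies
`Syz F = {(ℓ₀,…,ℓ₃) : ∑ ℓᵢFᵢ = 0}` (twisted by `1`), so that `𝓕` is
locally free (resp. splits as a sum of line bundles) iff `Syz F` is locally
free at all relevant homogeneous primes (resp. is a free module). -/

noncomputable section

local notation "R4" => MvPolynomial (Fin 4) ℂ

/-- The Euler relation `∑ zᵢ Fᵢ = 0`. -/
def EulerRel (F : Fin 4 → R4) : Prop := ∑ i, X i * F i = 0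

/-- The integrability condition `ω ∧ dω = 0` for `ω = ∑ Fᵢ dzᵢ`, written out
in coefficients. -/
def IntegrableForm (F : Fin 4 → R4) : Prop :=
  ∀ i j k : Fin 4,
    F i * (pderiv j (F k) - pderiv k (F j)) +
    F j * (pderiv k (F i) - pderiv i (F k)) +
    F k * (pderiv i (F j) - pderiv j (F i)) = 0

/-- The singular scheme `{F₀ = ⋯ = F₃ = 0}` has codimension at least two:
the `Fᵢ` have no common prime factor. -/
def CodimGE2 (F : Fin 4 → R4) : Prop := ¬ ∃ p : R4, Prime p ∧ ∀ i, p ∣ F i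

/-- `ω = ∑ Fᵢ dzᵢ` defines a degree `d` codimension one foliation on `ℙ³`
with singular scheme of codimension at least two. -/
def IsFoliation (d : ℕ) (F : Fin 4 → R4) : Prop :=
  (∀ i, (F i).IsHomogeneous (d + 1)) ∧ EulerRel F ∧ IntegrableForm F ∧ CodimGE2 F

/-- The saturation `I^sat = ⋃ₗ (I : (z₀,…,z₃)ˡ)` of an ideal of
`ℂ[z₀,…,z₃]`. -/
def satIdeal (I : Ideal R4) : Ideal R4 :=
  ⨆ l : ℕ, I.colon ((Ideal.span (Set.range (X : Fin 4 → R4))) ^ l : Ideal R4)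

/-- An ideal of `ℂ[z₀,…,z₃]` is saturated if it coincides with its
saturation. -/
def IsSaturated (I : Ideal R4) : Prop := satIdeal I = I

/-- The homogeneous ideal `(F₀,…,F₃)` defining the singular scheme. -/
def singIdeal (F : Fin 4 → R4) : Ideal R4 := Ideal.span (Set.range F)

/-- The graded module of syzygies of `(F₀,…,F₃)`; it is the module of twisted
global sections of `𝓕 ⊕ 𝓞` (suitably twisted), where `𝓕` is the tangent
sheaf of the foliation defined by `∑ Fᵢ dzᵢ`. -/
def Syz (F : Fin 4 → R4) : Submodule R4 (Fin 4 → R4) :=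
  LinearMap.ker (Fintype.linearCombination R4 F)

/-- The irrelevant ideal `(z₀,…,z₃)`. -/
def irrelevant : Ideal R4 := Ideal.span (Set.range (X : Fin 4 → R4))

/-- An ideal is homogeneous if it contains all homogeneous components of its
elements. -/
def IsHomogIdeal (I : Ideal R4) : Prop :=
  ∀ f ∈ I, ∀ n : ℕ, homogeneousComponent n f ∈ I

/-- The tangent sheaf of the foliation given by `F` is locally free:
the syzygy module is free at every relevant point of `Proj ℂ[z₀,…,z₃] = ℙ³`. -/
def TangentLocallyFree (F : Fin 4 → R4) : Prop :=
  ∀ p : Ideal R4, ∀ hp : p.IsPrime, IsHomogIdeal p → ¬ irrelevant ≤ p →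
    Module.Free (Localization (p.primeCompl (hp := hp)))
      (LocalizedModule (p.primeCompl (hp := hp)) ↥(Syz F))

/-- The tangent sheaf of the foliation given by `F` splits as a direct sum of
two line bundles: equivalently (by Horrocks' criterion), the graded module of
syzygies of `(F₀,…,F₃)` is free. -/
def TangentSplits (F : Fin 4 → R4) : Prop := Module.Free R4 ↥(Syz F)


/-- The foliation defined by `F` is, up to an invertible linear change of
coordinates, defined by a `1`-form with no `dz₀` component and coefficients
not involving `z₀`, i.e. it is the linear pull-back (under a linear projection
`ℙ³ ⇢ ℙ²`) of a foliation on a plane. -/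
def IsLinearPullback (F : Fin 4 → R4) : Prop :=
  ∃ A : Matrix (Fin 4) (Fin 4) ℂ, IsUnit A ∧
    (∑ i, (aeval (fun k => ∑ l, C (A k l) * X l) (F i)) * C (A i 0) = 0) ∧
    ∀ j, pderiv (0 : Fin 4)
      (∑ i, (aeval (fun k => ∑ l, C (A k l) * X l) (F i)) * C (A i j)) = 0

/-- The tangent sheaf of the foliation defined by `F` is isomorphic to
`𝓞(1) ⊕ 𝓞(1-d)`: the syzygy module of `(F₀,…,F₃)` is freely generated by the
Euler syzygy together with a constant syzygy (degree `1 - 1 = 0`) and a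
homogeneous syzygy of degree `1 - (1-d) = d`. -/
def SplitsAsO1OplusO1subD (d : ℕ) (F : Fin 4 → R4) : Prop :=
  ∃ (c : Fin 4 → ℂ) (v : Fin 4 → R4),
    (∀ i, (v i).IsHomogeneous d) ∧
    (∀ s : Fin 4 → R4, (∑ i, s i * F i = 0) ↔
      ∃ p q r : R4, s = fun i => p * C (c i) + q * v i + r * X i) ∧
    (∀ p q r : R4,
      (fun i => p * C (c i) + q * v i + r * X i) = (0 : Fin 4 → R4) →
      p = 0 ∧ q = 0 ∧ r = 0)

/-! A nonzero constant syzygy `c` of `ω = ∑ Fᵢ dzᵢ` is the summand `𝓞(1)` of the tangent sheaf,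
and in linear coordinates with `c = e₀` it says `F₀ = 0`.

(⟹) Contracting `ω ∧ dω = 0` with `c` gives `Fₖ · ∂_c Fⱼ = Fⱼ · ∂_c Fₖ`. The `Fᵢ` have no common
factor, so `∂_c F = h F`, and `h` has degree `-1`; hence `∂_c F = 0` and `ω` does not depend on
`z₀`.

(⟸) With `F₀ = 0`, the Euler relation reads `z₁F₁ + z₂F₂ + z₃F₃ = 0`, so by exactness of the
Koszul complex `(F₁, F₂, F₃) = z × W` with `W` of degree `d`. As `z × W` has no common factor, its
syzygies are exactly the combinations of `W` and `z`, so the syzygies of `F` are freely generated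
by `e₀`, `(0, W)` and the Euler field. -/

open Matrix

section UniqueFactorization

variable {R ι : Type*} [CommRing R] [IsDomain R] [UniqueFactorizationMonoid R]

theorem dvd_of_forall_dvd_mul_of_not_exists_prime {g : ι → R}
    (hg : ¬ ∃ p : R, Prime p ∧ ∀ i, p ∣ g i) (hg0 : g ≠ 0) {a u : R}
    (h : ∀ i, a ∣ u * g i) : a ∣ u := by
  induction a using UniqueFactorizationMonoid.induction_on_prime generalizing u with
  | h₁ =>
    obtain ⟨i, hi⟩ := Function.ne_iff.1 hg0
    exact zero_dvd_iff.2 ((mul_eq_zero.1 (zero_dvd_iff.1 (h i))).resolve_right hi)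
  | h₂ a ha => exact ha.dvd
  | h₃ a p _ hp ih =>
    push Not at hg
    obtain ⟨j, hj⟩ := hg p hp
    obtain ⟨w, rfl⟩ := (hp.dvd_or_dvd (dvd_of_mul_right_dvd (h j))).resolve_right hj
    exact mul_dvd_mul_left p
      (ih fun i => (mul_dvd_mul_iff_left hp.ne_zero).1 (by simpa [mul_assoc] using h i))

theorem exists_eq_smul_of_mul_eq_mul {g u : ι → R}
    (hg : ¬ ∃ p : R, Prime p ∧ ∀ i, p ∣ g i) (hg0 : g ≠ 0)
    (h : ∀ i j, u i * g j = u j * g i) : ∃ α : R, u = α • g := by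
  obtain ⟨i₀, hi₀⟩ := Function.ne_iff.1 hg0
  obtain ⟨α, hα⟩ : g i₀ ∣ u i₀ :=
    dvd_of_forall_dvd_mul_of_not_exists_prime hg hg0 fun j => ⟨u j, by rw [h]; ring⟩
  refine ⟨α, funext fun i => mul_right_cancel₀ hi₀ ?_⟩
  rw [h, hα, Pi.smul_apply, smul_eq_mul]
  ring

theorem exists_eq_smul_of_cross_eq_zero {g u : Fin 3 → R}
    (hg : ¬ ∃ p : R, Prime p ∧ ∀ i, p ∣ g i) (hg0 : g ≠ 0) (h : u ⨯₃ g = 0) :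
    ∃ α : R, u = α • g := by
  have h0 : u 1 * g 2 - u 2 * g 1 = 0 := congrFun h 0
  have h1 : u 2 * g 0 - u 0 * g 2 = 0 := congrFun h 1
  have h2 : u 0 * g 1 - u 1 * g 0 = 0 := congrFun h 2
  refine exists_eq_smul_of_mul_eq_mul hg hg0 fun i j => ?_
  fin_cases i <;> fin_cases j <;> simp <;> grind

theorem dotProduct_cross_eq_zero_iff {z W t : Fin 3 → R}
    (hz : ¬ ∃ p : R, Prime p ∧ ∀ i, p ∣ z i) (hzW : ¬ ∃ p : R, Prime p ∧ ∀ i, p ∣ (z ⨯₃ W) i)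
    (hzW0 : z ⨯₃ W ≠ 0) :
    t ⬝ᵥ z ⨯₃ W = 0 ↔ ∃ a b : R, t = a • W + b • z := by
  constructor
  · intro h
    obtain ⟨α, hα⟩ : ∃ α : R, t ⨯₃ z = α • z ⨯₃ W := by
      refine exists_eq_smul_of_cross_eq_zero hzW hzW0 ?_
      rw [cross_cross_eq_smul_sub_smul, h, dot_self_cross, zero_smul, zero_smul, sub_zero]
    obtain ⟨β, hβ⟩ : ∃ β : R, t + α • W = β • z := by
      refine exists_eq_smul_of_cross_eq_zero hz (by rintro rfl; simp at hzW0) ?_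
      rw [map_add, LinearMap.add_apply, map_smul, LinearMap.smul_apply, hα, ← smul_add,
        cross_anticomm', smul_zero]
    exact ⟨-α, β, by rw [← hβ]; simp⟩
  · rintro ⟨a, b, rfl⟩
    simp [add_dotProduct, dot_self_cross, dot_cross_self]

end UniqueFactorization

theorem eq_zero_of_smul_add_smul_eq_zero {R : Type*} [CommRing R] [IsDomain R]
    {z W : Fin 3 → R} {a b : R} (hzW0 : z ⨯₃ W ≠ 0) (h : a • W + b • z = 0) :
    a = 0 ∧ b = 0 := by
  have ha : a • z ⨯₃ W = 0 := by
    simpa [cross_self] using congrArg (z ⨯₃ ·) h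
  obtain rfl := (smul_eq_zero.1 ha).resolve_right hzW0
  refine ⟨rfl, (by simpa using h : b = 0 ∨ z = 0).resolve_right ?_⟩
  rintro rfl
  simp at hzW0

theorem Matrix.exists_isUnit_col_zero_eq {K : Type*} [Field K] {n : ℕ} {c : Fin (n + 1) → K}
    (hc : c ≠ 0) : ∃ A : Matrix (Fin (n + 1)) (Fin (n + 1)) K, IsUnit A ∧ ∀ k, A k 0 = c k := by
  obtain ⟨W, hW⟩ := (K ∙ c).exists_isCompl
  have hrank : Module.finrank K W = n := by
    have := Submodule.finrank_add_eq_of_isCompl hW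
    rw [finrank_span_singleton hc, Module.finrank_fin_fun] at this
    omega
  let b := Module.finBasisOfFinrankEq K W hrank
  let v : Fin (n + 1) → Fin (n + 1) → K := Fin.cons c (W.subtype ∘ b)
  have hv : LinearIndependent K v := by
    refine linearIndependent_finCons.2 ⟨b.linearIndependent.map' W.subtype W.ker_subtype, ?_⟩
    intro hspan
    have hcW : c ∈ W := by
      refine Submodule.span_le.2 ?_ hspan
      rintro _ ⟨i, rfl⟩
      exact (b i).2
    exact hc ((Submodule.disjoint_def.1 hW.disjoint) c (Submodule.mem_span_singleton_self c) hcW)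
  exact ⟨Matrix.of fun i j => v j i, linearIndependent_cols_iff_isUnit.1 hv, fun k => rfl⟩

namespace MvPolynomial

section Homogeneous

variable {σ R : Type*}

theorem eq_zero_of_isHomogeneous_mul [CommRing R] [IsDomain R] {f g : MvPolynomial σ R}
    {m n : ℕ} (hg : g.IsHomogeneous n) (hg0 : g ≠ 0) (hfg : (f * g).IsHomogeneous m) (hmn : m < n) :
    f = 0 := by
  by_contra hf
  have := hfg.totalDegree (mul_ne_zero hf hg0)
  rw [totalDegree_mul_of_isDomain hf hg0, hg.totalDegree hg0] at this
  omega

attribute [local instance] MvPolynomial.gradedAlgebra in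
theorem homogeneousComponent_X_mul [CommSemiring R] (i : σ) (n : ℕ) (f : MvPolynomial σ R) :
    homogeneousComponent (n + 1) (X i * f) = X i * homogeneousComponent n f := by
  have := DirectSum.coe_decompose_mul_of_left_mem_of_le (homogeneousSubmodule σ R) (n := n + 1)
    (b := f) (isHomogeneous_X R i) (Nat.le_add_left 1 n)
  rw [← decomposition.decompose'_apply, ← decomposition.decompose'_apply]
  exact this

end Homogeneous

section Koszul

variable {σ R : Type*} [CommRing R]

theorem not_exists_prime_dvd_X_and_dvd_X [IsDomain R] {i j : σ} (hij : i ≠ j) :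
    ¬ ∃ p : MvPolynomial σ R, Prime p ∧ p ∣ X i ∧ p ∣ X j := by
  rintro ⟨p, hp, hi, hj⟩
  have hXi : X i ∣ p := (hp.irreducible.associated_of_dvd X_prime.irreducible hi).symm.dvd
  exact hij (X_dvd_X.1 (hXi.trans hj))

theorem mem_span_X_pair_of_X_mul_mem {i j k : σ} (hij : i ≠ j) (hik : i ≠ k)
    {f : MvPolynomial σ R} (hf : X i * f ∈ Ideal.span {X j, X k}) :
    f ∈ Ideal.span {X j, X k} := by
  rw [← Set.image_pair, mem_ideal_span_X_image] at hf ⊢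
  intro m hm
  obtain ⟨l, hl, hml⟩ := hf (Finsupp.single i 1 + m) (by
    rw [support_X_mul]; exact Finset.mem_map_of_mem _ hm)
  refine ⟨l, hl, ?_⟩
  have hil : i ≠ l := by rcases hl with rfl | rfl <;> assumption
  simpa [Finsupp.single_apply, hil] using hml

theorem exists_eq_cross_of_dotProduct_eq_zero [IsDomain R] {e : Fin 3 → σ}
    (he : Function.Injective e) {G : Fin 3 → MvPolynomial σ R} (h : (fun i => X (e i)) ⬝ᵥ G = 0) :
    ∃ V, G = (fun i => X (e i)) ⨯₃ V := by
  have h' : X (e 0) * G 0 + X (e 1) * G 1 + X (e 2) * G 2 = 0 := by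
    simpa [dotProduct, Fin.sum_univ_three] using h
  have hG0 : G 0 ∈ Ideal.span {X (e 1), X (e 2)} := by
    refine mem_span_X_pair_of_X_mul_mem (he.ne (by decide : (0 : Fin 3) ≠ 1))
      (he.ne (by decide : (0 : Fin 3) ≠ 2)) ?_
    rw [Ideal.mem_span_pair]
    exact ⟨-G 1, -G 2, by linear_combination -h'⟩
  obtain ⟨a, b, hab⟩ := Ideal.mem_span_pair.1 hG0
  obtain ⟨c, hc⟩ : X (e 2) ∣ X (e 0) * a + G 1 := by
    have hdvd : X (e 2) ∣ X (e 1) * (X (e 0) * a + G 1) :=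
      ⟨-(X (e 0) * b + G 2), by linear_combination h' + X (e 0) * hab⟩
    refine (X_prime.dvd_or_dvd hdvd).resolve_left ?_
    rw [X_dvd_X]
    exact he.ne (by decide)
  have hG2 : X (e 2) * (G 2 + X (e 0) * b + X (e 1) * c) = 0 := by
    linear_combination h' + X (e 0) * hab - X (e 1) * hc
  refine ⟨![c, -b, a], ?_⟩
  funext i
  fin_cases i <;> simp [cross_apply]
  · linear_combination -hab
  · linear_combination hc
  · linear_combination (mul_eq_zero.1 hG2).resolve_left (X_ne_zero _)

theorem exists_isHomogeneous_eq_cross_of_dotProduct_eq_zero [IsDomain R] {e : Fin 3 → σ}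
    (he : Function.Injective e) {G : Fin 3 → MvPolynomial σ R} {n : ℕ}
    (hG : ∀ i, (G i).IsHomogeneous (n + 1)) (h : (fun i => X (e i)) ⬝ᵥ G = 0) :
    ∃ W, (∀ i, (W i).IsHomogeneous n) ∧ G = (fun i => X (e i)) ⨯₃ W := by
  obtain ⟨V, hV⟩ := exists_eq_cross_of_dotProduct_eq_zero he h
  refine ⟨fun i => homogeneousComponent n (V i),
    fun i => homogeneousComponent_isHomogeneous _ _, ?_⟩
  funext i
  rw [← homogeneousComponent_eq_self (hG i), hV]
  fin_cases i <;> simp [cross_apply, homogeneousComponent_X_mul]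

end Koszul

section LinearSubst

variable {ι R : Type*} [Fintype ι] [CommRing R]

/-- The linear change of variables `f(z) ↦ f(A z)`. -/
def linearSubst (A : Matrix ι ι R) : MvPolynomial ι R →ₐ[R] MvPolynomial ι R :=
  aeval fun k => ∑ l, C (A k l) * X l

@[simp]
theorem linearSubst_X (A : Matrix ι ι R) (k : ι) :
    linearSubst A (X k) = ∑ l, C (A k l) * X l :=
  aeval_X _ _

@[simp]
theorem linearSubst_C (A : Matrix ι ι R) (a : R) : linearSubst A (C a) = C a :=
  (linearSubst A).commutes a

theorem linearSubst_comp_X (A : Matrix ι ι R) : linearSubst A ∘ X = A.map C *ᵥ X := by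
  funext k
  simp [mulVec, dotProduct]

theorem linearSubst_linearSubst (A B : Matrix ι ι R) (f : MvPolynomial ι R) :
    linearSubst A (linearSubst B f) = linearSubst (B * A) f := by
  rw [← AlgHom.comp_apply]
  congr 1
  refine algHom_ext fun k => ?_
  simp only [AlgHom.comp_apply, linearSubst_X, map_sum, map_mul, linearSubst_C, Matrix.mul_apply,
    Finset.mul_sum, Finset.sum_mul]
  rw [Finset.sum_comm]
  simp only [mul_assoc]

theorem linearSubst_one [DecidableEq ι] (f : MvPolynomial ι R) : linearSubst 1 f = f := by
  rw [← AlgHom.id_apply (R := R) f]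
  congr 1
  refine algHom_ext fun k => ?_
  simp [Matrix.one_apply, apply_ite C, ite_mul]

theorem IsHomogeneous.linearSubst {f : MvPolynomial ι R} {n : ℕ} (hf : f.IsHomogeneous n)
    (A : Matrix ι ι R) : (linearSubst A f).IsHomogeneous n := by
  have := hf.aeval (fun k => ∑ l, C (A k l) * X l) (n := 1)
    fun k => IsHomogeneous.sum _ _ _ fun l _ => isHomogeneous_C_mul_X (A k l) l
  rwa [one_mul] at this

theorem pderiv_linearSubst (A : Matrix ι ι R) (f : MvPolynomial ι R) (m : ι) :
    pderiv m (linearSubst A f) = linearSubst A (∑ n, C (A n m) * pderiv n f) := by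
  classical
  induction f using MvPolynomial.induction_on with
  | C a => simp
  | add p q hp hq => simp [hp, hq, mul_add, Finset.sum_add_distrib]
  | mul_X p i hp =>
    have hXi : pderiv m (linearSubst A (X i)) =
        linearSubst A (∑ n, C (A n m) * pderiv n (X i)) := by
      simp [pderiv_X, Pi.single_apply]
    rw [map_mul, pderiv_mul, hp, hXi, ← map_mul, ← map_mul, ← map_add]
    congr 1
    simp only [pderiv_mul, mul_add, Finset.sum_add_distrib, Finset.sum_mul, Finset.mul_sum]
    congr 1 <;> exact Finset.sum_congr rfl fun _ _ => by ring

variable [DecidableEq ι] {A : Matrix ι ι R}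

theorem linearSubst_linearSubst_inv (hA : IsUnit A) (f : MvPolynomial ι R) :
    linearSubst A (linearSubst A⁻¹ f) = f := by
  rw [linearSubst_linearSubst, Matrix.nonsing_inv_mul _ ((isUnit_iff_isUnit_det A).1 hA),
    linearSubst_one]

theorem linearSubst_inv_linearSubst (hA : IsUnit A) (f : MvPolynomial ι R) :
    linearSubst A⁻¹ (linearSubst A f) = f := by
  rw [linearSubst_linearSubst, Matrix.mul_nonsing_inv _ ((isUnit_iff_isUnit_det A).1 hA),
    linearSubst_one]

theorem linearSubst_injective (hA : IsUnit A) : Function.Injective (linearSubst A) :=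
  Function.LeftInverse.injective (linearSubst_inv_linearSubst hA)

theorem linearSubst_eq_zero_iff (hA : IsUnit A) {f : MvPolynomial ι R} :
    linearSubst A f = 0 ↔ f = 0 :=
  map_eq_zero_iff _ (linearSubst_injective hA)

def linearSubstEquiv (hA : IsUnit A) : MvPolynomial ι R ≃ₐ[R] MvPolynomial ι R :=
  AlgEquiv.ofAlgHom (linearSubst A) (linearSubst A⁻¹)
    (AlgHom.ext fun f => linearSubst_linearSubst_inv hA f)
    (AlgHom.ext fun f => linearSubst_inv_linearSubst hA f)

theorem map_C_mul_map_C_inv (hA : IsUnit A) :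
    A.map C * A⁻¹.map (C : R →+* MvPolynomial ι R) = 1 := by
  rw [← Matrix.map_mul, Matrix.mul_nonsing_inv _ ((isUnit_iff_isUnit_det A).1 hA)]
  exact Matrix.map_one _ (map_zero _) (map_one _)

theorem map_C_inv_mul_map_C (hA : IsUnit A) :
    A⁻¹.map C * A.map (C : R →+* MvPolynomial ι R) = 1 := by
  rw [← Matrix.map_mul, Matrix.nonsing_inv_mul _ ((isUnit_iff_isUnit_det A).1 hA)]
  exact Matrix.map_one _ (map_zero _) (map_one _)

end LinearSubst

section Pullback

variable {ι R : Type*} [Fintype ι] [CommRing R]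

/-- The pull-back `A^* ω` of the `1`-form `ω = ∑ Fᵢ dzᵢ` along `z ↦ A z`. -/
def pullbackForm (A : Matrix ι ι R) (F : ι → MvPolynomial ι R) : ι → MvPolynomial ι R :=
  (linearSubst A ∘ F) ᵥ* A.map C

theorem isHomogeneous_pullbackForm {F : ι → MvPolynomial ι R} {n : ℕ}
    (hF : ∀ i, (F i).IsHomogeneous n) (A : Matrix ι ι R) (j : ι) :
    (pullbackForm A F j).IsHomogeneous n := by
  refine IsHomogeneous.sum _ _ _ fun i _ => ?_
  simpa using ((hF i).linearSubst A).mul (isHomogeneous_C _ (A i j))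

theorem pullbackForm_apply_of_col_eq {F : ι → MvPolynomial ι R} {A : Matrix ι ι R} {c : ι → R}
    {j : ι} (hAc : ∀ k, A k j = c k) :
    pullbackForm A F j = linearSubst A (∑ i, C (c i) * F i) := by
  simp [pullbackForm, vecMul, dotProduct, hAc, mul_comm]

variable [DecidableEq ι] {A : Matrix ι ι R}

/-- The pull-back `A⁻¹ t(A z)` of the vector field `t` along `z ↦ A z`. -/
def pullbackVec (A : Matrix ι ι R) (t : ι → MvPolynomial ι R) : ι → MvPolynomial ι R :=
  A⁻¹.map C *ᵥ (linearSubst A ∘ t)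

theorem pullbackVec_dotProduct_pullbackForm (hA : IsUnit A) (t F : ι → MvPolynomial ι R) :
    pullbackVec A t ⬝ᵥ pullbackForm A F = linearSubst A (t ⬝ᵥ F) := by
  rw [pullbackVec, pullbackForm, dotProduct_comm, ← dotProduct_mulVec, mulVec_mulVec,
    map_C_mul_map_C_inv hA, one_mulVec]
  simp [dotProduct, mul_comm]

theorem pullbackVec_X (hA : IsUnit A) : pullbackVec A X = X := by
  rw [pullbackVec, linearSubst_comp_X, mulVec_mulVec, map_C_inv_mul_map_C hA, one_mulVec]

theorem pullbackVec_C (A : Matrix ι ι R) (c : ι → R) :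
    pullbackVec A (C ∘ c) = C ∘ (A⁻¹ *ᵥ c) := by
  funext i
  simp [pullbackVec, Function.comp_def, RingHom.map_mulVec]

theorem pullbackVec_add (A : Matrix ι ι R) (t u : ι → MvPolynomial ι R) :
    pullbackVec A (t + u) = pullbackVec A t + pullbackVec A u := by
  rw [pullbackVec, pullbackVec, pullbackVec, ← mulVec_add]
  congr 1
  funext i
  simp

theorem pullbackVec_smul (A : Matrix ι ι R) (p : MvPolynomial ι R) (t : ι → MvPolynomial ι R) :
    pullbackVec A (p • t) = linearSubst A p • pullbackVec A t := by
  rw [pullbackVec, pullbackVec, ← mulVec_smul]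
  congr 1
  funext i
  simp

theorem pullbackVec_injective (hA : IsUnit A) : Function.Injective (pullbackVec A) := by
  intro t u h
  have h' := congrArg (A.map C *ᵥ ·) h
  simp only [pullbackVec, mulVec_mulVec, map_C_mul_map_C_inv hA, one_mulVec] at h'
  funext i
  exact linearSubst_injective hA (congrFun h' i)

end Pullback

end MvPolynomial

theorem splitsAsO1OplusO1subD_cons_zero_cross {d : ℕ} {W : Fin 3 → R4}
    (hW : ∀ i, (W i).IsHomogeneous d)
    (hcd : CodimGE2 (Fin.cons 0 ((fun i : Fin 3 => (X i.succ : R4)) ⨯₃ W))) :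
    SplitsAsO1OplusO1subD d (Fin.cons 0 ((fun i : Fin 3 => (X i.succ : R4)) ⨯₃ W)) := by
  set z : Fin 3 → R4 := fun i => X i.succ
  have hzW : ¬ ∃ p : R4, Prime p ∧ ∀ i, p ∣ (z ⨯₃ W) i := fun ⟨p, hp, hdvd⟩ =>
    hcd ⟨p, hp, Fin.cases (by simp) (by simpa using hdvd)⟩
  have hzW0 : z ⨯₃ W ≠ 0 := fun h0 => hzW ⟨X 0, X_prime, by simp [h0]⟩
  have hz : ¬ ∃ p : R4, Prime p ∧ ∀ i, p ∣ z i := fun ⟨p, hp, hdvd⟩ =>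
    not_exists_prime_dvd_X_and_dvd_X (by decide : (1 : Fin 4) ≠ 2) ⟨p, hp, hdvd 0, hdvd 1⟩
  refine ⟨Fin.cons 1 0, Fin.cons 0 W, Fin.cases (isHomogeneous_zero _ _ _) hW,
    fun s => ?_, fun p q r h => ?_⟩
  · rw [Fin.sum_univ_succ]
    simp only [Fin.cons_zero, Fin.cons_succ, mul_zero, zero_add]
    change Fin.tail s ⬝ᵥ z ⨯₃ W = 0 ↔ _
    rw [dotProduct_cross_eq_zero_iff hz hzW hzW0]
    constructor
    · rintro ⟨a, b, hab⟩
      refine ⟨s 0 - b * X 0, a, b, funext (Fin.cases (by simp) fun i => ?_)⟩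
      simp only [Fin.cons_succ, Pi.zero_apply, C_0, mul_zero, zero_add]
      exact congrFun hab i
    · rintro ⟨p, q, r, rfl⟩
      exact ⟨q, r, funext fun i => by simp [Fin.tail, z]⟩
  · have htail : q • W + r • z = 0 := funext fun i => by simpa using congrFun h i.succ
    obtain ⟨rfl, rfl⟩ := eq_zero_of_smul_add_smul_eq_zero hzW0 htail
    simpa using congrFun h 0

theorem SplitsAsO1OplusO1subD.of_pullbackForm {d : ℕ} {F : Fin 4 → R4}
    {A : Matrix (Fin 4) (Fin 4) ℂ} (hA : IsUnit A)
    (h : SplitsAsO1OplusO1subD d (pullbackForm A F)) : SplitsAsO1OplusO1subD d F := by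
  obtain ⟨c, v, hv, hsyz, hindep⟩ := h
  obtain ⟨v₀, hv₀def⟩ : ∃ v₀ : Fin 4 → R4, v₀ = linearSubst A⁻¹ ∘ (A.map C *ᵥ v) := ⟨_, rfl⟩
  have hv₀ : pullbackVec A v₀ = v := by
    have hσv₀ : linearSubst A ∘ v₀ = A.map C *ᵥ v :=
      funext fun i => by rw [hv₀def]; exact linearSubst_linearSubst_inv hA _
    rw [pullbackVec, hσv₀, mulVec_mulVec, map_C_inv_mul_map_C hA, one_mulVec]
  have hcomb : ∀ p q r : R4,
      pullbackVec A (fun i => p * C ((A *ᵥ c) i) + q * v₀ i + r * X i) =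
        fun i => linearSubst A p * C (c i) + linearSubst A q * v i + linearSubst A r * X i := by
    intro p q r
    have hsmul : ∀ (p q r : R4) (c : Fin 4 → ℂ) (v : Fin 4 → R4),
        (fun i => p * C (c i) + q * v i + r * X i) = p • (C ∘ c) + q • v + r • X :=
      fun p q r c v => funext fun i => by simp
    rw [hsmul, hsmul, pullbackVec_add, pullbackVec_add, pullbackVec_smul, pullbackVec_smul,
      pullbackVec_smul, pullbackVec_C, pullbackVec_X hA, hv₀, mulVec_mulVec,
      Matrix.nonsing_inv_mul _ ((isUnit_iff_isUnit_det A).1 hA), one_mulVec]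
  refine ⟨A *ᵥ c, v₀, fun i => ?_, fun s => ?_, fun p q r h0 => ?_⟩
  · rw [hv₀def]
    exact (IsHomogeneous.sum _ _ _ fun j _ => (hv j).C_mul _).linearSubst _
  · change s ⬝ᵥ F = 0 ↔ _
    rw [← linearSubst_eq_zero_iff hA, ← pullbackVec_dotProduct_pullbackForm hA]
    constructor
    · intro hs
      obtain ⟨p, q, r, hpqr⟩ := (hsyz (pullbackVec A s)).1 hs
      refine ⟨linearSubst A⁻¹ p, linearSubst A⁻¹ q, linearSubst A⁻¹ r, pullbackVec_injective hA ?_⟩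
      simpa only [hcomb, linearSubst_linearSubst_inv hA] using hpqr
    · rintro ⟨p, q, r, rfl⟩
      exact (hsyz _).2 ⟨_, _, _, hcomb p q r⟩
  · have := hindep (linearSubst A p) (linearSubst A q) (linearSubst A r) (by
      rw [← hcomb, h0]
      simpa using pullbackVec_smul A 0 0)
    simpa only [linearSubst_eq_zero_iff hA] using this

theorem codimGE2_pullbackForm {F : Fin 4 → R4} {A : Matrix (Fin 4) (Fin 4) ℂ} (hA : IsUnit A)
    (hF : CodimGE2 F) : CodimGE2 (pullbackForm A F) := by
  rintro ⟨p, hp, hdvd⟩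
  have hσF : linearSubst A ∘ F = pullbackForm A F ᵥ* A⁻¹.map C := by
    rw [pullbackForm, vecMul_vecMul, map_C_mul_map_C_inv hA, vecMul_one]
  refine hF ⟨linearSubst A⁻¹ p, (MulEquiv.prime_iff (linearSubstEquiv hA).symm).2 hp,
    fun i => ?_⟩
  rw [← linearSubst_inv_linearSubst hA (F i)]
  refine map_dvd _ ?_
  rw [← Function.comp_apply (f := linearSubst A), hσF]
  simp only [vecMul, dotProduct]
  exact Finset.dvd_sum fun j _ => dvd_mul_of_dvd_left (hdvd j) _

theorem eulerRel_pullbackForm {F : Fin 4 → R4} {A : Matrix (Fin 4) (Fin 4) ℂ} (hA : IsUnit A)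
    (hF : EulerRel F) : EulerRel (pullbackForm A F) := by
  change X ⬝ᵥ pullbackForm A F = 0
  rw [← pullbackVec_X hA, pullbackVec_dotProduct_pullbackForm hA]
  exact (linearSubst_eq_zero_iff hA).2 hF

theorem splitsAsO1OplusO1subD_of_sum_C_mul_eq_zero {d : ℕ} {F : Fin 4 → R4}
    (hhom : ∀ i, (F i).IsHomogeneous (d + 1)) (heuler : EulerRel F) (hcd : CodimGE2 F)
    {c : Fin 4 → ℂ} (hc : c ≠ 0) (hcF : ∑ i, C (c i) * F i = 0) :
    SplitsAsO1OplusO1subD d F := by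
  obtain ⟨A, hA, hAc⟩ := exists_isUnit_col_zero_eq hc
  have hG0 : pullbackForm A F 0 = 0 := by
    rw [pullbackForm_apply_of_col_eq hAc, hcF, map_zero]
  have hzG : (fun i : Fin 3 => (X i.succ : R4)) ⬝ᵥ Fin.tail (pullbackForm A F) = 0 := by
    have := eulerRel_pullbackForm hA heuler
    rwa [EulerRel, Fin.sum_univ_succ, hG0, mul_zero, zero_add] at this
  obtain ⟨W, hW, hGW⟩ := exists_isHomogeneous_eq_cross_of_dotProduct_eq_zero
    (Fin.succ_injective 3) (fun i => isHomogeneous_pullbackForm hhom A i.succ) hzG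
  have hG : pullbackForm A F = Fin.cons 0 ((fun i : Fin 3 => (X i.succ : R4)) ⨯₃ W) := by
    rw [← hG0, ← hGW]
    exact (Fin.cons_self_tail _).symm
  refine SplitsAsO1OplusO1subD.of_pullbackForm hA ?_
  rw [hG]
  exact splitsAsO1OplusO1subD_cons_zero_cross hW (hG ▸ codimGE2_pullbackForm hA hcd)

theorem sum_C_mul_pderiv_mul_comm_of_integrableForm {F : Fin 4 → R4} (hint : IntegrableForm F)
    {c : Fin 4 → ℂ} (hcF : ∑ i, C (c i) * F i = 0) (j k : Fin 4) :
    (∑ n, C (c n) * pderiv n (F j)) * F k = (∑ n, C (c n) * pderiv n (F k)) * F j := by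
  have hcF' : ∀ k, ∑ i, C (c i) * pderiv k (F i) = 0 := fun k => by
    simpa [map_sum, pderiv_C_mul] using congrArg (pderiv k) hcF
  have hsum : ∑ i, C (c i) * (F i * (pderiv j (F k) - pderiv k (F j)) +
      F j * (pderiv k (F i) - pderiv i (F k)) + F k * (pderiv i (F j) - pderiv j (F i))) = 0 :=
    Finset.sum_eq_zero fun i _ => by rw [hint i j k, mul_zero]
  have hexpand : ∑ i, C (c i) * (F i * (pderiv j (F k) - pderiv k (F j)) +
      F j * (pderiv k (F i) - pderiv i (F k)) + F k * (pderiv i (F j) - pderiv j (F i))) =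
      (∑ i, C (c i) * F i) * (pderiv j (F k) - pderiv k (F j)) +
        F j * (∑ i, C (c i) * pderiv k (F i)) - F j * (∑ i, C (c i) * pderiv i (F k)) +
        F k * (∑ i, C (c i) * pderiv i (F j)) - F k * (∑ i, C (c i) * pderiv j (F i)) := by
    simp only [Finset.mul_sum, Finset.sum_mul, ← Finset.sum_add_distrib, ← Finset.sum_sub_distrib]
    exact Finset.sum_congr rfl fun i _ => by ring
  linear_combination hexpand.symm.trans hsum - (pderiv j (F k) - pderiv k (F j)) * hcF -
    F j * hcF' k + F k * hcF' j

theorem sum_C_mul_pderiv_eq_zero_of_integrableForm {d : ℕ} {F : Fin 4 → R4}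
    (hhom : ∀ i, (F i).IsHomogeneous (d + 1)) (hint : IntegrableForm F) (hcd : CodimGE2 F)
    {c : Fin 4 → ℂ} (hcF : ∑ i, C (c i) * F i = 0) (i : Fin 4) :
    ∑ n, C (c n) * pderiv n (F i) = 0 := by
  have hF0 : F ≠ 0 := fun h0 => hcd ⟨X 0, X_prime, by simp [h0]⟩
  obtain ⟨h, hh⟩ := exists_eq_smul_of_mul_eq_mul hcd hF0
    (sum_C_mul_pderiv_mul_comm_of_integrableForm hint hcF)
  obtain ⟨j, hj⟩ := Function.ne_iff.1 hF0
  have hhj : (h * F j).IsHomogeneous d := by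
    rw [← smul_eq_mul, ← Pi.smul_apply, ← hh]
    exact IsHomogeneous.sum _ _ _ fun n _ => by simpa using ((hhom j).pderiv).C_mul (c n)
  have h0 : h = 0 := eq_zero_of_isHomogeneous_mul (hhom j) hj hhj (lt_add_one d)
  simpa [h0] using congrFun hh i

theorem isLinearPullback_of_sum_C_mul_pderiv_eq_zero {F : Fin 4 → R4} {c : Fin 4 → ℂ}
    (hc : c ≠ 0) (hcF : ∑ i, C (c i) * F i = 0)
    (hD : ∀ i, ∑ n, C (c n) * pderiv n (F i) = 0) : IsLinearPullback F := by
  obtain ⟨A, hA, hAc⟩ := exists_isUnit_col_zero_eq hc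
  refine ⟨A, hA, ?_, fun j => ?_⟩
  · change pullbackForm A F 0 = 0
    rw [pullbackForm_apply_of_col_eq hAc, hcF, map_zero]
  · change pderiv 0 (∑ i, linearSubst A (F i) * C (A i j)) = 0
    simp [map_sum, pderiv_linearSubst, hAc, hD]

theorem exists_sum_C_mul_eq_zero_of_isLinearPullback {F : Fin 4 → R4}
    (h : IsLinearPullback F) : ∃ c : Fin 4 → ℂ, c ≠ 0 ∧ ∑ i, C (c i) * F i = 0 := by
  obtain ⟨A, hA, h0, -⟩ := h
  refine ⟨fun k => A k 0, fun hcol => ?_, (linearSubst_eq_zero_iff hA).1 ?_⟩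
  · have : A *ᵥ Pi.single 0 1 = A *ᵥ 0 := by
      funext k
      simpa [mulVec_single] using congrFun hcol k
    exact one_ne_zero (congrFun (mulVec_injective_iff_isUnit.2 hA this) 0)
  · rw [← pullbackForm_apply_of_col_eq fun k => rfl]
    exact h0

/-- A degree `d` reduced codimension one foliation on `ℙ³`
has tangent sheaf isomorphic to `𝓞(1) ⊕ 𝓞(1-d)` if and only if it is the
linear pull-back of a degree `d` reduced foliation on `ℙ²`. -/
theorem split_O1_iff_linear_pullback (d : ℕ) (F : Fin 4 → R4)
    (hfol : IsFoliation d F) :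
    SplitsAsO1OplusO1subD d F ↔ IsLinearPullback F := by
  obtain ⟨hhom, heuler, hint, hcd⟩ := hfol
  constructor
  · rintro ⟨c, v, -, hsyz, hindep⟩
    have hcF : ∑ i, C (c i) * F i = 0 := by
      simpa [mul_comm] using (hsyz fun i => C (c i)).2 ⟨1, 0, 0, by simp⟩
    have hc : c ≠ 0 := by
      rintro rfl
      exact one_ne_zero (hindep 1 0 0 (funext fun i => by simp)).1
    exact isLinearPullback_of_sum_C_mul_pderiv_eq_zero hc hcF
      (sum_C_mul_pderiv_eq_zero_of_integrableForm hhom hint hcd hcF)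
  · intro hF
    obtain ⟨c, hc, hcF⟩ := exists_sum_C_mul_eq_zero_of_isLinearPullback hF
    exact splitsAsO1OplusO1subD_of_sum_C_mul_eq_zero hhom heuler hcd hc hcF

end
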